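/- arXiv:2008.05069 — 2 statements merged into one kernel-verified Lean document; each statement's English description precedes it below -/
import Mathlib

section
/- Let q be a positive integer and let P be an induced path dangling oddly from a set X of vertices in a graph G with |X| ≥ R(q,q). Then there exists Y ⊆ X with |Y| ≥ q such that the graph (G − (X−Y) − E(Y))/E(P), obtained from G by deleting the vertices of X − Y, deleting all edges between vertices of Y, and contracting all edges of P, is a vertex-minor of G. -/
open SimpleGraph

/-! ### Basic operations: local complementation, pivoting, vertex-minors -/

/-- Local complementation at a vertex `v`: the adjacency between each pair of
neighbours of `v` is toggled. -/
def localComp {V : Type*} (G : SimpleGraph V) (v : V) : SimpleGraph V where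
  Adj a b := (G.Adj a b ∧ ¬(G.Adj v a ∧ G.Adj v b)) ∨
    (a ≠ b ∧ ¬ G.Adj a b ∧ G.Adj v a ∧ G.Adj v b)
  symm := by
    constructor
    rintro a b (⟨h1, h2⟩ | ⟨h1, h2, h3, h4⟩)
    · exact Or.inl ⟨h1.symm, fun hc => h2 ⟨hc.2, hc.1⟩⟩
    · exact Or.inr ⟨h1.symm, fun hc => h2 hc.symm, h4, h3⟩
  loopless := by
    constructor
    rintro a (⟨h1, _⟩ | ⟨h1, _⟩)
    · exact G.irrefl h1
    · exact h1 rfl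

/-- Pivoting an edge `uv`: `G ∧ uv = G * u * v * u`. -/
def pivotG {V : Type*} (G : SimpleGraph V) (u v : V) : SimpleGraph V :=
  localComp (localComp (localComp G u) v) u

/-- Finite simple graphs, concretely represented on `Fin n`. -/
abbrev FinGraph := Σ n : ℕ, SimpleGraph (Fin n)

/-- One step in the construction of a vertex-minor: pass to an isomorphic copy,
perform a local complementation, or delete a vertex. -/
def VMStep (G H : FinGraph) : Prop :=
  Nonempty (G.2 ≃g H.2) ∨
  (∃ v : Fin G.1, Nonempty ((localComp G.2 v) ≃g H.2)) ∨
  (∃ v : Fin G.1, Nonempty ((G.2.induce {u | u ≠ v}) ≃g H.2))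

/-- One step in the construction of a pivot-minor: pass to an isomorphic copy,
pivot an edge, or delete a vertex. -/
def PMStep (G H : FinGraph) : Prop :=
  Nonempty (G.2 ≃g H.2) ∨
  (∃ u v : Fin G.1, G.2.Adj u v ∧ Nonempty ((pivotG G.2 u v) ≃g H.2)) ∨
  (∃ v : Fin G.1, Nonempty ((G.2.induce {u | u ≠ v}) ≃g H.2))

/-- `H` is a vertex-minor of `G` (both given concretely on `Fin _`). -/
def IsVertexMinorFG (H G : FinGraph) : Prop := Relation.ReflTransGen VMStep G H

/-- `H` is a pivot-minor of `G` (both given concretely on `Fin _`). -/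
def IsPivotMinorFG (H G : FinGraph) : Prop := Relation.ReflTransGen PMStep G H

/-- A finite graph represented concretely on `Fin (Nat.card V)`. -/
noncomputable def toFinGraph {V : Type*} [Finite V] (G : SimpleGraph V) : FinGraph :=
  ⟨Nat.card V, G.comap (Finite.equivFin V).symm⟩

/-- `H` is a vertex-minor of `G`. -/
def HasVertexMinor {V W : Type*} [Finite V] [Finite W]
    (G : SimpleGraph V) (H : SimpleGraph W) : Prop :=
  IsVertexMinorFG (toFinGraph H) (toFinGraph G)

/-- `H` is a pivot-minor of `G`. -/
def HasPivotMinor {V W : Type*} [Finite V] [Finite W]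
    (G : SimpleGraph V) (H : SimpleGraph W) : Prop :=
  IsPivotMinorFG (toFinGraph H) (toFinGraph G)

/-- A class of finite graphs closed under isomorphism, local complementation and
vertex deletion. -/
def VertexMinorClosed (𝒢 : Set FinGraph) : Prop :=
  (∀ G ∈ 𝒢, ∀ H : FinGraph, Nonempty (G.2 ≃g H.2) → H ∈ 𝒢) ∧
  (∀ G ∈ 𝒢, ∀ v : Fin G.1, (⟨G.1, localComp G.2 v⟩ : FinGraph) ∈ 𝒢) ∧
  (∀ G ∈ 𝒢, ∀ v : Fin G.1, toFinGraph (G.2.induce {u | u ≠ v}) ∈ 𝒢)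

/-- A class of finite graphs closed under isomorphism, pivoting and
vertex deletion. -/
def PivotMinorClosed (𝒢 : Set FinGraph) : Prop :=
  (∀ G ∈ 𝒢, ∀ H : FinGraph, Nonempty (G.2 ≃g H.2) → H ∈ 𝒢) ∧
  (∀ G ∈ 𝒢, ∀ u v : Fin G.1, G.2.Adj u v → (⟨G.1, pivotG G.2 u v⟩ : FinGraph) ∈ 𝒢) ∧
  (∀ G ∈ 𝒢, ∀ v : Fin G.1, toFinGraph (G.2.induce {u | u ≠ v}) ∈ 𝒢)

/-! ### Chromatic data -/

/-- The chromatic number, as a natural number (graphs here are finite). -/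
noncomputable def chi {V : Type*} (G : SimpleGraph V) : ℕ := G.chromaticNumber.toNat

/-- The ball of radius `ρ` around `v`: all vertices at distance at most `ρ` from `v`. -/
def ballSet {V : Type*} (G : SimpleGraph V) (v : V) (ρ : ℕ) : Set V :=
  {u | ∃ p : G.Walk v u, p.length ≤ ρ}

/-- `χ^{(ρ)}(G)`: the largest chromatic number of a `ρ`-ball of `G`. -/
noncomputable def chiBall {V : Type*} (G : SimpleGraph V) (ρ : ℕ) : ℕ :=
  ⨆ v : V, chi (G.induce (ballSet G v ρ))

/-- The distance from `u` to `v` is at least `n` (in particular, this holds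
vacuously for unreachable pairs). -/
def distGE {V : Type*} (G : SimpleGraph V) (u v : V) (n : ℕ) : Prop :=
  ∀ p : G.Walk u v, n ≤ p.length

/-- A stable (independent) set of vertices. -/
def IsStableSet {V : Type*} (G : SimpleGraph V) (A : Set V) : Prop :=
  ∀ a ∈ A, ∀ b ∈ A, ¬ G.Adj a b

/-- `A` covers `B`: every vertex of `B` has a neighbour in `A`. -/
def Covers {V : Type*} (G : SimpleGraph V) (A B : Set V) : Prop :=
  ∀ b ∈ B, ∃ a ∈ A, G.Adj a b

/-- `A` and `B` are anti-complete: there are no edges between them. -/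
def AntiComplete {V : Type*} (G : SimpleGraph V) (A B : Set V) : Prop :=
  ∀ a ∈ A, ∀ b ∈ B, ¬ G.Adj a b

/-- An induced path of `G`, given as a walk: it is a path, and the only edges of `G`
between its vertices are the edges of the path. -/
def IsInducedPath {V : Type*} (G : SimpleGraph V) {a b : V} (p : G.Walk a b) : Prop :=
  p.IsPath ∧ ∀ x ∈ p.support, ∀ y ∈ p.support, G.Adj x y → p.toSubgraph.Adj x y
/-! ### Big cliques and bloated trees -/

/-- A big clique: a maximal clique (w.r.t. vertex inclusion) of size at least 3. -/
def IsBigClique {V : Type*} (G : SimpleGraph V) (s : Finset V) : Prop :=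
  G.IsClique ↑s ∧ 3 ≤ s.card ∧ ∀ t : Finset V, G.IsClique ↑t → s ⊆ t → t = s

/-- Two vertices are related when they lie in a common big clique. -/
def bigCliqueRel {V : Type*} (G : SimpleGraph V) (u v : V) : Prop :=
  u = v ∨ ∃ s : Finset V, IsBigClique G s ∧ u ∈ s ∧ v ∈ s

/-- The graph obtained by contracting every big clique to a single vertex. -/
def contractBigCliques {V : Type*} (G : SimpleGraph V) :
    SimpleGraph (Quot (bigCliqueRel G)) where
  Adj a b := a ≠ b ∧ ∃ u v, G.Adj u v ∧ Quot.mk _ u = a ∧ Quot.mk _ v = b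
  symm := by
    constructor
    rintro a b ⟨hne, u, v, h, hu, hv⟩
    exact ⟨hne.symm, v, u, h.symm, hv, hu⟩
  loopless := ⟨fun a h => h.1 rfl⟩

/-- A bloated tree: every edge is in at most one big clique, vertices of a big
`k`-clique have degree at most `k`, and contracting all big cliques yields a tree. -/
def IsBloatedTree {V : Type*} (T : SimpleGraph V) : Prop :=
  (∀ u v, T.Adj u v → ∀ s t : Finset V, IsBigClique T s → IsBigClique T t →
    u ∈ s → v ∈ s → u ∈ t → v ∈ t → s = t) ∧
  (∀ s : Finset V, IsBigClique T s → ∀ v ∈ s, (T.neighborSet v).ncard ≤ s.card) ∧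
  (contractBigCliques T).IsTree

/-- A leaf: a vertex of degree at most 1. -/
def IsLeaf {V : Type*} (G : SimpleGraph V) (v : V) : Prop :=
  (G.neighborSet v).ncard ≤ 1

/-- A branching vertex of a bloated tree: a vertex of degree at least 3 that is
not contained in a triangle. -/
def IsBranching {V : Type*} (G : SimpleGraph V) (v : V) : Prop :=
  3 ≤ (G.neighborSet v).ncard ∧ ¬ ∃ a b, G.Adj v a ∧ G.Adj v b ∧ G.Adj a b

/-! ### Dangling paths and contractions -/

/-- The path `p` dangles from `X`: the set of vertices outside `p` with a
neighbour on `p` is exactly `X`. -/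
def DanglesFrom {V : Type*} (G : SimpleGraph V) {a b : V} (p : G.Walk a b)
    (X : Set V) : Prop :=
  {v | v ∉ p.support ∧ ∃ u ∈ p.support, G.Adj v u} = X

/-- The path `p` dangles oddly from `X`: moreover every vertex of `X` has an odd
number of neighbours on `p`. -/
def DanglesOddly {V : Type*} (G : SimpleGraph V) {a b : V} (p : G.Walk a b)
    (X : Set V) : Prop :=
  DanglesFrom G p X ∧ ∀ x ∈ X, Odd ({u | u ∈ p.support ∧ G.Adj x u}.ncard)

/-- Contract the set `S` to the single vertex `a₀` (for `a₀ ∈ S` with `G[S]`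
connected this is contraction of all edges inside `S`). -/
def contractSet {V : Type*} (G : SimpleGraph V) (S : Set V) (a₀ : V) :
    SimpleGraph {w : V // w ∉ S ∨ w = a₀} where
  Adj u v := u ≠ v ∧
    ((u.1 ∉ S ∧ v.1 ∉ S ∧ G.Adj u.1 v.1) ∨
     (u.1 = a₀ ∧ v.1 ∉ S ∧ ∃ s ∈ S, G.Adj s v.1) ∨
     (v.1 = a₀ ∧ u.1 ∉ S ∧ ∃ s ∈ S, G.Adj u.1 s))
  symm := by
    constructor
    rintro u v ⟨hne, h⟩
    refine ⟨hne.symm, ?_⟩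
    rcases h with ⟨h1, h2, h3⟩ | ⟨h1, h2, s, hs, hadj⟩ | ⟨h1, h2, s, hs, hadj⟩
    · exact Or.inl ⟨h2, h1, h3.symm⟩
    · exact Or.inr (Or.inr ⟨h1, h2, s, hs, hadj.symm⟩)
    · exact Or.inr (Or.inl ⟨h1, h2, s, hs, hadj.symm⟩)
  loopless := ⟨fun u h => h.1 rfl⟩

/-! ### Ramsey numbers -/

/-- Every graph on `Fin N` contains a clique of size `n` or a stable set of size `m`. -/
def RamseyProp (N n m : ℕ) : Prop :=
  ∀ G : SimpleGraph (Fin N),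
    (∃ s : Finset (Fin N), G.IsNClique n s) ∨ (∃ s : Finset (Fin N), Gᶜ.IsNClique m s)

/-- The Ramsey number `R(n,m)`: the least `N` such that every graph on at least `N`
vertices contains a clique of size `n` or a stable set of size `m`. -/
noncomputable def ramsey (n m : ℕ) : ℕ := sInf {N | ∀ M, N ≤ M → RamseyProp M n m}

/-! ### Subdivided complete bipartite graphs and interfered versions -/

/-- The vertex set of (an interfered) `K¹_{n,m}`: the `x_i`, the `y_j`, and the
subdivision vertices `z_{i,j}`. -/
abbrev IVert (n m : ℕ) := Fin n ⊕ Fin m ⊕ Fin n × Fin m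

/-- `K¹_{n,m}`: the complete bipartite graph `K_{n,m}` with every edge subdivided
exactly once. -/
def KOneBip (n m : ℕ) : SimpleGraph (IVert n m) :=
  SimpleGraph.fromRel (fun a b => ∃ i j,
    (a = Sum.inl i ∧ b = Sum.inr (Sum.inr (i, j))) ∨
    (a = Sum.inr (Sum.inl j) ∧ b = Sum.inr (Sum.inr (i, j))))

/-- The pairs that may be adjacent in an interfered `K¹_{n,m}`. -/
def InterferedAllowed (n m : ℕ) (a b : IVert n m) : Prop :=
  (∃ i j, a = Sum.inl i ∧ b = Sum.inr (Sum.inr (i, j))) ∨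
  (∃ i j, a = Sum.inr (Sum.inl j) ∧ b = Sum.inr (Sum.inr (i, j))) ∨
  (∃ (k i : Fin n) (j : Fin m), k < i ∧ a = Sum.inl k ∧ b = Sum.inr (Sum.inr (i, j)))

/-- An interfered `K¹_{n,m}`: all edges `x_i z_{i,j}` and `z_{i,j} y_j` are present,
and all other edges are of the form `x_k z_{i,j}` with `k < i`. -/
def IsInterfered (n m : ℕ) (G : SimpleGraph (IVert n m)) : Prop :=
  (∀ i j, G.Adj (Sum.inl i) (Sum.inr (Sum.inr (i, j)))) ∧
  (∀ i j, G.Adj (Sum.inr (Sum.inl j)) (Sum.inr (Sum.inr (i, j)))) ∧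
  (∀ a b, G.Adj a b → InterferedAllowed n m a b ∨ InterferedAllowed n m b a)
/-! ### Long covers -/

/-- A long cover `(L⁰, L¹, L², L³)` of a set `C`. -/
def IsLongCover {V : Type*} (G : SimpleGraph V) (L : Fin 4 → Set V) (C : Set V) : Prop :=
  (∀ i j : Fin 4, i ≠ j → Disjoint (L i) (L j)) ∧
  (∀ i : Fin 4, Disjoint (L i) C) ∧
  (G.induce (L 0)).Connected ∧
  Covers G (L 0) (L 1) ∧ Covers G (L 1) (L 2) ∧ Covers G (L 2) (L 3) ∧
  Covers G (L 3) C ∧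
  AntiComplete G C (L 0) ∧ AntiComplete G C (L 1) ∧ AntiComplete G C (L 2) ∧
  AntiComplete G (L 0) (L 2) ∧ AntiComplete G (L 0) (L 3) ∧ AntiComplete G (L 1) (L 3)

/-- A long `q`-cover of a set `C`. -/
def IsLongQCover {V : Type*} (G : SimpleGraph V) {q : ℕ}
    (ℒ : Fin q → Fin 4 → Set V) (C : Set V) : Prop :=
  (∀ i, IsLongCover G (ℒ i) C) ∧
  (∀ i j, i ≠ j →
    Disjoint (ℒ i 0 ∪ ℒ i 1 ∪ ℒ i 2 ∪ ℒ i 3) (ℒ j 0 ∪ ℒ j 1 ∪ ℒ j 2 ∪ ℒ j 3)) ∧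
  (∀ i j, i < j →
    AntiComplete G (ℒ j 0 ∪ ℒ j 1 ∪ ℒ j 2) (ℒ i 0 ∪ ℒ i 1 ∪ ℒ i 2 ∪ ℒ i 3))

/-! ### Multicovers -/

/-- A multicover `(N_x : x ∈ X)` of a set `C`, where `X` is presented as an
injective tuple `x : Fin m → V` (whose ordering is the total order on `X`). -/
def IsMulticover {V : Type*} (G : SimpleGraph V) {m : ℕ}
    (x : Fin m → V) (N : Fin m → Set V) (C : Set V) : Prop :=
  Function.Injective x ∧
  (∀ i, N i ⊆ G.neighborSet (x i)) ∧
  (∀ i, x i ∉ C) ∧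
  (∀ i j, x i ∉ N j) ∧
  (∀ i, Disjoint (N i) C) ∧
  (∀ i j, i ≠ j → Disjoint (N i) (N j)) ∧
  (∀ i j, ¬ G.Adj (x i) (x j)) ∧
  (∀ i, ∀ u ∈ C, ¬ G.Adj (x i) u) ∧
  (∀ i, ∀ u ∈ C, ∃ w ∈ N i, G.Adj w u) ∧
  (∀ i j, i < j → ∀ u ∈ N i, ¬ G.Adj (x j) u)

/-- A pure multicover: no `x ∈ X` has a neighbour in `N_y` for `y ≠ x`. -/
def IsPureMC {V : Type*} (G : SimpleGraph V) {m : ℕ}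
    (x : Fin m → V) (N : Fin m → Set V) : Prop :=
  ∀ i j, i ≠ j → ∀ u ∈ N i, ¬ G.Adj (x j) u

/-- An impure multicover: for `x ≺ y`, `x` is complete to `N_y`. -/
def IsImpureMC {V : Type*} (G : SimpleGraph V) {m : ℕ}
    (x : Fin m → V) (N : Fin m → Set V) : Prop :=
  ∀ i j, i < j → ∀ u ∈ N j, G.Adj (x i) u

/-!
Write `P = a c d …`. Pivoting the first edge `ac` of `P` (or, when `P = ac`, locally
complementing at `c`) gives a locally equivalent graph in which `a d …` is an induced path
dangling oddly from `X ∪ {c}`, while the edges between vertices off `P` that are not both in `X`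
are untouched. Iterating shrinks `P` to the single vertex `a`, which is then adjacent to exactly
`X` outside `P`. Ramsey's theorem gives `Y ⊆ X` of size `q` that is a clique or a stable set;
one more local complementation at `a` turns a clique into a stable set. Deleting `X − Y` and
`P − a` now leaves `(G − (X − Y) − E(Y))/E(P)`, with `a` as the contracted vertex.
-/

section LocalComplementation

variable {V : Type*} {G : SimpleGraph V}

lemma localComp_adj_iff {v x y : V} :
    (localComp G v).Adj x y ↔ x ≠ y ∧ (G.Adj x y ↔ ¬ (G.Adj v x ∧ G.Adj v y)) := by
  rw [localComp]
  by_cases hxy : x = y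
  · subst hxy; simp
  · by_cases h : G.Adj x y <;> simp [h, hxy]

lemma localComp_adj_of_not_adj {v x y : V} (h : ¬ G.Adj v x ∨ ¬ G.Adj v y) :
    (localComp G v).Adj x y ↔ G.Adj x y := by
  rw [localComp_adj_iff]
  exact ⟨fun h' => h'.2.2 (by tauto), fun h' => ⟨h'.ne, by tauto⟩⟩

lemma localComp_adj_self_left {v y : V} : (localComp G v).Adj v y ↔ G.Adj v y :=
  localComp_adj_of_not_adj (.inl G.irrefl)

lemma localComp_adj_of_adj_of_adj {v x y : V} (hx : G.Adj v x) (hy : G.Adj v y) (hxy : x ≠ y) :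
    (localComp G v).Adj x y ↔ ¬ G.Adj x y := by
  rw [localComp_adj_iff]
  tauto

lemma pivotG_adj {u v : V} (huv : G.Adj u v) : (pivotG G u v).Adj u v := by
  have := huv.ne
  simp only [pivotG, localComp_adj_iff, G.adj_comm v u]
  simp_all

lemma pivotG_adj_left {u v y : V} (huv : G.Adj u v) (hyu : y ≠ u) (hyv : y ≠ v) :
    (pivotG G u v).Adj u y ↔ G.Adj v y := by
  have := huv.ne
  have := huv.symm
  simp only [pivotG, localComp_adj_iff]
  by_cases huy : G.Adj u y <;> by_cases hvy : G.Adj v y <;> simp_all [eq_comm]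

lemma pivotG_adj_right {u v y : V} (huv : G.Adj u v) (hyu : y ≠ u) (hyv : y ≠ v) :
    (pivotG G u v).Adj v y ↔ G.Adj u y := by
  have := huv.ne
  have := huv.symm
  simp only [pivotG, localComp_adj_iff]
  by_cases huy : G.Adj u y <;> by_cases hvy : G.Adj v y <;> simp_all [eq_comm]

lemma pivotG_adj_of_ne {u v x y : V} (huv : G.Adj u v)
    (hxu : x ≠ u) (hxv : x ≠ v) (hyu : y ≠ u) (hyv : y ≠ v) :
    (pivotG G u v).Adj x y ↔
      (G.Adj x y ↔ ((G.Adj u x ∧ G.Adj v y) ↔ (G.Adj v x ∧ G.Adj u y))) := by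
  have := huv.ne
  simp only [pivotG, localComp_adj_iff]
  by_cases hxy : x = y
  · subst hxy; simp_all [and_comm]
  have := huv.symm
  by_cases a0 : G.Adj x y <;> by_cases a1 : G.Adj u x <;> by_cases a2 : G.Adj v x <;>
    by_cases a3 : G.Adj u y <;> by_cases a4 : G.Adj v y <;> simp_all [eq_comm]

lemma pivotG_adj_iff_of_not_adj {u v x y : V} (huv : G.Adj u v)
    (hxu : x ≠ u) (hxv : x ≠ v) (hyu : y ≠ u) (hyv : y ≠ v)
    (h₁ : ¬ (G.Adj u x ∧ G.Adj v y)) (h₂ : ¬ (G.Adj v x ∧ G.Adj u y)) :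
    (pivotG G u v).Adj x y ↔ G.Adj x y := by
  rw [pivotG_adj_of_ne huv hxu hxv hyu hyv]
  tauto

end LocalComplementation

def SimpleGraph.Iso.localComp {V W : Type*} {G : SimpleGraph V} {H : SimpleGraph W}
    (φ : G ≃g H) {v : V} {w : W} (hv : φ v = w) : _root_.localComp G v ≃g _root_.localComp H w :=
  ⟨φ.toEquiv, by subst hv; simp [localComp_adj_iff, φ.map_adj_iff]⟩

def LocallyEquivalent {V : Type*} (G H : SimpleGraph V) : Prop :=
  Relation.ReflTransGen (fun A B => ∃ v, B = localComp A v) G H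

lemma LocallyEquivalent.localComp {V : Type*} {G H : SimpleGraph V} (h : LocallyEquivalent G H)
    (v : V) : LocallyEquivalent G (_root_.localComp H v) :=
  h.tail ⟨v, rfl⟩

lemma LocallyEquivalent.pivotG {V : Type*} {G H : SimpleGraph V} (h : LocallyEquivalent G H)
    (u v : V) : LocallyEquivalent G (_root_.pivotG H u v) :=
  ((h.localComp u).localComp v).localComp u

namespace HasVertexMinor

variable {V W U : Type*} [Finite V] [Finite W] [Finite U]

lemma refl (G : SimpleGraph V) : HasVertexMinor G G := Relation.ReflTransGen.refl

lemma trans {G : SimpleGraph V} {F : SimpleGraph W} {H : SimpleGraph U}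
    (h₁ : HasVertexMinor G F) (h₂ : HasVertexMinor F H) : HasVertexMinor G H :=
  Relation.ReflTransGen.trans h₁ h₂

lemma of_iso {G : SimpleGraph V} {H : SimpleGraph W} {H' : SimpleGraph U}
    (h : HasVertexMinor G H) (φ : H ≃g H') : HasVertexMinor G H' :=
  h.tail <| .inl ⟨(Iso.comap _ H).trans (φ.trans (Iso.comap _ H').symm)⟩

end HasVertexMinor

section VertexMinorOperations

variable {V : Type*} [Finite V]

lemma hasVertexMinor_localComp (G : SimpleGraph V) (v : V) :
    HasVertexMinor G (localComp G v) := by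
  let e := Finite.equivFin V
  refine .single (.inr (.inl ⟨e v, ⟨?_⟩⟩))
  exact ((Iso.comap e.symm G).localComp (e.symm_apply_apply v)).trans
    (Iso.comap e.symm (localComp G v)).symm

lemma LocallyEquivalent.hasVertexMinor {G H : SimpleGraph V} (h : LocallyEquivalent G H) :
    HasVertexMinor G H := by
  induction h with
  | refl => exact .refl G
  | tail _ hstep ih =>
    obtain ⟨v, rfl⟩ := hstep
    exact ih.trans (hasVertexMinor_localComp _ v)

lemma hasVertexMinor_deleteVertex (G : SimpleGraph V) (v : V) :
    HasVertexMinor G (G.induce {u | u ≠ v}) := by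
  let e := Finite.equivFin V
  refine .single (.inr (.inr ⟨e v, ⟨?_⟩⟩))
  refine RelIso.trans ⟨e.symm.subtypeEquiv fun u => ?_, Iff.rfl⟩
    (Iso.comap (Finite.equivFin {u | u ≠ v}).symm _).symm
  exact not_congr e.symm_apply_eq.symm

lemma hasVertexMinor_induce_compl (G : SimpleGraph V) (D : Finset V) :
    HasVertexMinor G (G.induce (↑D : Set V)ᶜ) := by
  classical
  induction D using Finset.induction_on with
  | empty =>
    rw [Finset.coe_empty, Set.compl_empty]
    exact (HasVertexMinor.refl G).of_iso (induceUnivIso G).symm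
  | @insert v D hv ih =>
    have hvD : v ∈ (↑D : Set V)ᶜ := hv
    exact (ih.trans (hasVertexMinor_deleteVertex _ ⟨v, hvD⟩)).of_iso
      ⟨{ toFun u := ⟨u.1.1, by simpa [not_or] using ⟨fun h => u.2 (Subtype.ext h), u.1.2⟩⟩
         invFun u := ⟨⟨u.1, fun h => u.2 (by simp [h])⟩, fun h =>
           u.2 (Finset.mem_coe.2 (Finset.mem_insert.2 (.inl (congrArg Subtype.val h))))⟩ },
        Iff.rfl⟩

lemma hasVertexMinor_induce (G : SimpleGraph V) (s : Set V) : HasVertexMinor G (G.induce s) := by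
  have h := hasVertexMinor_induce_compl G (Set.toFinite sᶜ).toFinset
  rwa [Set.Finite.coe_toFinset, compl_compl] at h

end VertexMinorOperations

section InducedPathList

variable {V : Type*} {G H : SimpleGraph V}

def IsInducedPathList (G : SimpleGraph V) : List V → Prop
  | [] => True
  | a :: t => a ∉ t ∧ (∀ w ∈ t, G.Adj a w ↔ t.head? = some w) ∧ IsInducedPathList G t

/-- Only the inclusion `N(l) ⊆ X` of `DanglesFrom` is imposed; the reverse one follows from the
oddness. -/
def DanglesOddlyList (G : SimpleGraph V) (l : List V) (X : Set V) : Prop :=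
  (∀ w ∉ l, (∃ u ∈ l, G.Adj w u) → w ∈ X) ∧ ∀ x ∈ X, x ∉ l ∧ Odd {u | u ∈ l ∧ G.Adj x u}.ncard

lemma IsInducedPath.isInducedPathList {a b : V} {p : G.Walk a b} (hp : IsInducedPath G p) :
    IsInducedPathList G p.support := by
  obtain ⟨hpath, hind⟩ := hp
  simp only [Walk.adj_toSubgraph_iff_mem_edges] at hind
  induction p with
  | nil => exact ⟨List.not_mem_nil, by simp, trivial⟩
  | @cons a c b hac q ih =>
    have ha : a ∉ q.support := ((Walk.cons_isPath_iff hac q).1 hpath).2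
    have hind' : ∀ x ∈ q.support, ∀ y ∈ q.support, G.Adj x y → s(x, y) ∈ q.edges := by
      intro x hx y hy hxy
      rcases List.mem_cons.1 (hind x (by simp [hx]) y (by simp [hy]) hxy) with he | he
      · rcases Sym2.eq_iff.1 he with ⟨rfl, -⟩ | ⟨-, rfl⟩
        exacts [absurd hx ha, absurd hy ha]
      · exact he
    refine ⟨ha, fun w hw => ?_, ih hpath.of_cons hind'⟩
    rw [← q.cons_tail_support, List.head?_cons, Option.some_inj]
    refine ⟨fun haw => ?_, fun hcw => hcw ▸ hac⟩
    rcases List.mem_cons.1 (hind a (by simp) w (by simp [hw]) haw) with he | he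
    · rcases Sym2.eq_iff.1 he with ⟨-, h⟩ | ⟨h, -⟩
      exacts [h.symm, absurd h hac.ne]
    · exact absurd (q.fst_mem_support_of_mem_edges he) ha

lemma DanglesOddly.danglesOddlyList {a b : V} {p : G.Walk a b} {X : Set V}
    (hd : DanglesOddly G p X) : DanglesOddlyList G p.support X := by
  obtain ⟨hX, hodd⟩ := hd
  exact ⟨fun w hw hwp => hX ▸ ⟨hw, hwp⟩, fun x hx => ⟨(hX ▸ hx : x ∈ {v | _}).1, hodd x hx⟩⟩

lemma IsInducedPathList.congr {l : List V} (hGH : ∀ x ∈ l, ∀ y ∈ l, H.Adj x y ↔ G.Adj x y)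
    (hl : IsInducedPathList G l) : IsInducedPathList H l := by
  induction l with
  | nil => trivial
  | cons a t ih =>
    refine ⟨hl.1, fun w hw => ?_,
      ih (fun x hx y hy => hGH x (by simp [hx]) y (by simp [hy])) hl.2.2⟩
    rw [hGH a (by simp) w (by simp [hw])]
    exact hl.2.1 w hw

lemma IsInducedPathList.adj {a c : V} {t : List V} (hP : IsInducedPathList G (a :: c :: t)) :
    G.Adj a c :=
  (hP.2.1 c List.mem_cons_self).2 rfl

lemma IsInducedPathList.ne_of_mem {a c w : V} {t : List V}
    (hP : IsInducedPathList G (a :: c :: t)) (hw : w ∈ t) : w ≠ a ∧ w ≠ c :=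
  ⟨fun h => hP.1 (List.mem_cons_of_mem c (h ▸ hw)), fun h => hP.2.2.1 (h ▸ hw)⟩

lemma IsInducedPathList.not_adj {a c w : V} {t : List V} (hP : IsInducedPathList G (a :: c :: t))
    (hw : w ∈ t) : ¬ G.Adj a w := fun haw =>
  (hP.ne_of_mem hw).2 (Option.some_injective _ ((hP.2.1 w (List.mem_cons_of_mem c hw)).1 haw)).symm

lemma DanglesOddlyList.not_adj {l : List V} {X : Set V} {w u : V} (h : DanglesOddlyList G l X)
    (hw : w ∉ l) (hwX : w ∉ X) (hu : u ∈ l) : ¬ G.Adj w u :=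
  fun hwu => hwX (h.1 w hw ⟨u, hu, hwu⟩)

lemma ncard_mem_cons_and {a : V} {P : V → Prop} [Decidable (P a)] {l : List V} (ha : a ∉ l) :
    {u | u ∈ a :: l ∧ P u}.ncard = {u | u ∈ l ∧ P u}.ncard + if P a then 1 else 0 := by
  have hfin : {u | u ∈ l ∧ P u}.Finite := l.finite_toSet.subset fun u hu => hu.1
  split_ifs with hPa
  · rw [← Set.ncard_insert_of_notMem (fun h => ha h.1) hfin]
    congr 1
    ext u
    by_cases hu : u = a <;> simp_all
  · congr 1
    ext u
    by_cases hu : u = a <;> simp_all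

lemma odd_ncard_mem_cons_and_iff {a : V} {P : V → Prop} {l : List V} (ha : a ∉ l) :
    Odd {u | u ∈ a :: l ∧ P u}.ncard ↔ (P a ↔ ¬ Odd {u | u ∈ l ∧ P u}.ncard) := by
  classical
  rw [ncard_mem_cons_and ha]
  split_ifs with hPa <;> simp [hPa, Nat.odd_add_one]

lemma odd_ncard_mem_singleton_and_iff {a : V} {P : V → Prop} :
    Odd {u | u ∈ [a] ∧ P u}.ncard ↔ P a := by
  rw [odd_ncard_mem_cons_and_iff List.not_mem_nil]
  simp

end InducedPathList

section ShortenPath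

variable {V : Type*} {G : SimpleGraph V} {X : Set V}

lemma DanglesOddlyList.localComp_adj_iff {l : List V} {c u v : V} (h : DanglesOddlyList G l X)
    (hc : c ∈ l) (hu : u ∉ l) (hv : v ∉ l) (huv : u ∉ X ∨ v ∉ X) :
    (localComp G c).Adj u v ↔ G.Adj u v := by
  refine localComp_adj_of_not_adj ?_
  rcases huv with huX | hvX
  exacts [.inl fun h' => h.not_adj hu huX hc h'.symm, .inr fun h' => h.not_adj hv hvX hc h'.symm]

lemma DanglesOddlyList.pivotG_adj_iff {l : List V} {a c u v : V} (h : DanglesOddlyList G l X)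
    (hac : G.Adj a c) (ha : a ∈ l) (hc : c ∈ l) (hu : u ∉ l) (hv : v ∉ l)
    (huv : u ∉ X ∨ v ∉ X) : (pivotG G a c).Adj u v ↔ G.Adj u v := by
  have hne : ∀ w ∉ l, w ≠ a ∧ w ≠ c := fun w hw => ⟨fun h => hw (h ▸ ha), fun h => hw (h ▸ hc)⟩
  have hfar : ∀ w ∉ l, w ∉ X → ¬ G.Adj a w ∧ ¬ G.Adj c w := fun w hw hwX =>
    ⟨fun h' => h.not_adj hw hwX ha h'.symm, fun h' => h.not_adj hw hwX hc h'.symm⟩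
  refine pivotG_adj_iff_of_not_adj hac (hne u hu).1 (hne u hu).2 (hne v hv).1 (hne v hv).2 ?_ ?_
  · rcases huv with huX | hvX
    exacts [fun h' => (hfar u hu huX).1 h'.1, fun h' => (hfar v hv hvX).2 h'.2]
  · rcases huv with huX | hvX
    exacts [fun h' => (hfar u hu huX).2 h'.1, fun h' => (hfar v hv hvX).1 h'.2]

lemma DanglesOddlyList.localComp_shorten {a c : V} (hac : G.Adj a c)
    (h : DanglesOddlyList G [a, c] X) : DanglesOddlyList (localComp G c) [a] (insert c X) := by
  refine ⟨fun w hw ⟨u, hu, hwu⟩ => ?_, fun x hx => ?_⟩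
  · obtain rfl : u = a := List.mem_singleton.1 hu
    by_cases hwc : w = c
    · exact .inl hwc
    have hw' : w ∉ [u, c] := by simpa [hwc] using hw
    refine .inr (by_contra fun hwX => h.not_adj (u := u) hw' hwX (by simp) ?_)
    exact (localComp_adj_of_not_adj
      (.inl fun hcw => h.not_adj (u := c) hw' hwX (by simp) hcw.symm)).1 hwu
  rcases hx with rfl | hxX
  · refine ⟨by simpa using hac.ne', odd_ncard_mem_singleton_and_iff.2 ?_⟩
    exact localComp_adj_self_left.2 hac.symm
  obtain ⟨hxl, hodd⟩ := h.2 x hxX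
  have hxa : x ≠ a := fun h => hxl (by simp [h])
  refine ⟨by simpa using hxa, odd_ncard_mem_singleton_and_iff.2 ?_⟩
  rw [odd_ncard_mem_cons_and_iff (by simpa using hac.ne), odd_ncard_mem_singleton_and_iff] at hodd
  by_cases hcx : G.Adj c x
  · rw [localComp_adj_of_adj_of_adj hcx hac.symm hxa]
    exact fun hxa' => (hodd.1 hxa') hcx.symm
  · rw [localComp_adj_of_not_adj (.inl hcx)]
    exact hodd.2 fun hxc' => hcx hxc'.symm

section Pivot

variable {a c d : V} {r : List V}

lemma IsInducedPathList.pivot_shorten (hP : IsInducedPathList G (a :: c :: d :: r)) :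
    IsInducedPathList (pivotG G a c) (a :: d :: r) := by
  refine ⟨fun h => hP.1 (List.mem_cons_of_mem c h), fun w hw => ?_,
    hP.2.2.2.2.congr fun x hx y hy => ?_⟩
  · rw [pivotG_adj_left hP.adj (hP.ne_of_mem hw).1 (hP.ne_of_mem hw).2]
    exact hP.2.2.2.1 w hw
  · refine pivotG_adj_iff_of_not_adj hP.adj (hP.ne_of_mem hx).1 (hP.ne_of_mem hx).2
      (hP.ne_of_mem hy).1 (hP.ne_of_mem hy).2 (fun h' => ?_) (fun h' => ?_)
    exacts [hP.not_adj hx h'.1, hP.not_adj hy h'.2]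

/-- Pivoting moves the adjacency of `x` to `c` over to `a`, and toggles its adjacency to `d`
exactly when `x ∼ a`; so the parity of the number of neighbours on the path survives. -/
lemma IsInducedPathList.odd_ncard_pivotG_iff (hP : IsInducedPathList G (a :: c :: d :: r))
    {x : V} (hx : x ∉ a :: c :: d :: r) :
    Odd {u | u ∈ a :: d :: r ∧ (pivotG G a c).Adj x u}.ncard ↔
      Odd {u | u ∈ a :: c :: d :: r ∧ G.Adj x u}.ncard := by
  simp only [List.mem_cons, not_or] at hx
  obtain ⟨hxa, hxc, -, -⟩ := hx
  have hd := hP.ne_of_mem (w := d) List.mem_cons_self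
  have hr : {u | u ∈ r ∧ (pivotG G a c).Adj x u} = {u | u ∈ r ∧ G.Adj x u} := by
    refine Set.ext fun u => and_congr_right fun hu => ?_
    have hu' := hP.ne_of_mem (List.mem_cons_of_mem d hu)
    exact pivotG_adj_iff_of_not_adj hP.adj hxa hxc hu'.1 hu'.2
      (fun h' => hP.2.2.not_adj hu h'.2) (fun h' => hP.not_adj (List.mem_cons_of_mem d hu) h'.2)
  have hxa' : (pivotG G a c).Adj x a ↔ G.Adj x c := by
    rw [(pivotG G a c).adj_comm, pivotG_adj_left hP.adj hxa hxc, G.adj_comm]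
  have hxd' : (pivotG G a c).Adj x d ↔ (G.Adj x d ↔ ¬ G.Adj x a) := by
    rw [pivotG_adj_of_ne hP.adj hxa hxc hd.1 hd.2, G.adj_comm a, G.adj_comm c x]
    have := hP.not_adj (w := d) List.mem_cons_self
    have := hP.2.2.adj
    tauto
  have hdr : d ∉ r := hP.2.2.2.2.1
  rw [odd_ncard_mem_cons_and_iff (fun h => hP.1 (List.mem_cons_of_mem c h)),
    odd_ncard_mem_cons_and_iff hdr, hr, hxa', hxd', odd_ncard_mem_cons_and_iff hP.1,
    odd_ncard_mem_cons_and_iff hP.2.2.1, odd_ncard_mem_cons_and_iff hdr]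
  tauto

lemma DanglesOddlyList.pivot_shorten (hP : IsInducedPathList G (a :: c :: d :: r))
    (h : DanglesOddlyList G (a :: c :: d :: r) X) :
    DanglesOddlyList (pivotG G a c) (a :: d :: r) (insert c X) := by
  have hac := hP.adj
  refine ⟨fun w hw ⟨u, hu, hwu⟩ => ?_, fun x hx => ?_⟩
  · by_cases hwc : w = c
    · exact .inl hwc
    have hw' : w ∉ a :: c :: d :: r := by simp_all
    refine .inr (by_contra fun hwX => ?_)
    have hwa : w ≠ a := fun h => hw' (by simp [h])
    rcases List.mem_cons.1 hu with rfl | hu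
    · rw [(pivotG G u c).adj_comm, pivotG_adj_left hac hwa hwc] at hwu
      exact h.not_adj hw' hwX (by simp) hwu.symm
    · rw [pivotG_adj_iff_of_not_adj hac hwa hwc (hP.ne_of_mem hu).1 (hP.ne_of_mem hu).2
        (fun h' => h.not_adj hw' hwX (by simp) h'.1.symm)
        (fun h' => h.not_adj hw' hwX (by simp) h'.1.symm)] at hwu
      exact h.not_adj hw' hwX (by simp [hu]) hwu
  rcases hx with rfl | hxX
  · have hempty : {u | u ∈ d :: r ∧ (pivotG G a x).Adj x u} = ∅ := by
      refine Set.eq_empty_of_forall_notMem fun u ⟨hu, hxu⟩ => ?_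
      rw [pivotG_adj_right hac (hP.ne_of_mem hu).1 (hP.ne_of_mem hu).2] at hxu
      exact hP.not_adj hu hxu
    refine ⟨by simp [hP.2.2.1, hac.ne'],
      (odd_ncard_mem_cons_and_iff fun h => hP.1 (List.mem_cons_of_mem x h)).2 ?_⟩
    rw [hempty, Set.ncard_empty]
    simpa using (pivotG_adj hac).symm
  obtain ⟨hxl, hodd⟩ := h.2 x hxX
  exact ⟨fun h => hxl (by simp_all), (hP.odd_ncard_pivotG_iff hxl).2 hodd⟩

end Pivot

lemma exists_locallyEquivalent_shorten {a c : V} {t : List V}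
    (hP : IsInducedPathList G (a :: c :: t)) (h : DanglesOddlyList G (a :: c :: t) X) :
    ∃ G', LocallyEquivalent G G' ∧ IsInducedPathList G' (a :: t) ∧
      DanglesOddlyList G' (a :: t) (insert c X) ∧
      ∀ u ∉ a :: c :: t, ∀ v ∉ a :: c :: t, (u ∉ X ∨ v ∉ X) → (G'.Adj u v ↔ G.Adj u v) := by
  match t with
  | [] =>
    exact ⟨localComp G c, .single ⟨c, rfl⟩, ⟨List.not_mem_nil, by simp, trivial⟩,
      h.localComp_shorten hP.adj, fun u hu v hv => h.localComp_adj_iff (by simp) hu hv⟩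
  | d :: r =>
    exact ⟨pivotG G a c, LocallyEquivalent.pivotG .refl a c, hP.pivot_shorten,
      h.pivot_shorten hP, fun u hu v hv => h.pivotG_adj_iff hP.adj (by simp) (by simp) hu hv⟩

end ShortenPath

section ContractPath

variable {V : Type*}

theorem exists_locallyEquivalent_adj_head_iff (a : V) (t : List V) :
    ∀ (G : SimpleGraph V) (X : Set V), IsInducedPathList G (a :: t) →
      DanglesOddlyList G (a :: t) X →
      ∃ F, LocallyEquivalent G F ∧ (∀ w ∉ a :: t, F.Adj a w ↔ w ∈ X) ∧
        ∀ u ∉ a :: t, ∀ v ∉ a :: t, (u ∉ X ∨ v ∉ X) → (F.Adj u v ↔ G.Adj u v) := by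
  induction t with
  | nil =>
    refine fun G X _ h => ⟨G, .refl, fun w hw => ⟨fun haw => h.1 w hw ⟨a, by simp, haw.symm⟩,
      fun hwX => ?_⟩, fun _ _ _ _ _ => Iff.rfl⟩
    exact (odd_ncard_mem_singleton_and_iff.1 (h.2 w hwX).2).symm
  | cons c t ih =>
    intro G X hP h
    obtain ⟨G', hGG', hP', h', hagree⟩ := exists_locallyEquivalent_shorten hP h
    obtain ⟨F, hG'F, hhead, hagree'⟩ := ih G' (insert c X) hP' h'
    have hne : ∀ w ∉ a :: c :: t, w ∉ a :: t ∧ w ≠ c := fun w hw => by simp_all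
    refine ⟨F, hGG'.trans hG'F, fun w hw => ?_, fun u hu v hv huv => ?_⟩
    · rw [hhead w (hne w hw).1]
      simp [(hne w hw).2]
    · rw [hagree' u (hne u hu).1 v (hne v hv).1 (by simp [(hne u hu).2, (hne v hv).2, huv]),
        hagree u hu v hv huv]

lemma exists_locallyEquivalent_isStableSet {G F : SimpleGraph V} {S X Y : Set V} {a : V}
    (hGF : LocallyEquivalent G F) (hXS : ∀ x ∈ X, x ∉ S)
    (hhead : ∀ w ∉ S, F.Adj a w ↔ w ∈ X)
    (hagree : ∀ u ∉ S, ∀ v ∉ S, (u ∉ X ∨ v ∉ X) → (F.Adj u v ↔ G.Adj u v))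
    (hYX : Y ⊆ X) (hY : F.IsClique Y ∨ IsStableSet F Y) :
    ∃ F', LocallyEquivalent G F' ∧ (∀ w ∉ S, F'.Adj a w ↔ w ∈ X) ∧
      (∀ u ∉ S, ∀ v ∉ S, (u ∉ X ∨ v ∉ X) → (F'.Adj u v ↔ G.Adj u v)) ∧ IsStableSet F' Y := by
  rcases hY with hY | hY
  · refine ⟨localComp F a, hGF.localComp a, fun w hw => localComp_adj_self_left.trans (hhead w hw),
      fun u hu v hv huv => ?_, fun x hx y hy => ?_⟩
    · rw [localComp_adj_of_not_adj (huv.imp (mt (hhead u hu).1) (mt (hhead v hv).1))]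
      exact hagree u hu v hv huv
    · have hax := (hhead x (hXS x (hYX hx))).2 (hYX hx)
      have hay := (hhead y (hXS y (hYX hy))).2 (hYX hy)
      obtain rfl | hxy := eq_or_ne x y
      · exact (localComp F a).irrefl
      · rw [localComp_adj_of_adj_of_adj hax hay hxy, not_not]
        exact hY hx hy hxy
  · exact ⟨F, hGF, hhead, hagree, hY⟩

end ContractPath

section Ramsey

variable {V : Type*}

theorem exists_isNClique_or_isNClique_compl (G : SimpleGraph V) (n m : ℕ) (s : Finset V)
    (hs : 2 ^ (n + m) ≤ s.card) : ∃ t ⊆ s, G.IsNClique n t ∨ Gᶜ.IsNClique m t := by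
  classical
  induction n generalizing m s with
  | zero => exact ⟨∅, Finset.empty_subset s, .inl (by simp)⟩
  | succ n ihn =>
    induction m generalizing s with
    | zero => exact ⟨∅, Finset.empty_subset s, .inr (by simp)⟩
    | succ m ihm =>
      obtain ⟨v, hv⟩ : s.Nonempty := Finset.card_pos.1 (lt_of_lt_of_le (by positivity) hs)
      set A := (s.erase v).filter (G.Adj v)
      set B := (s.erase v).filter (¬ G.Adj v ·)
      have hAB : A.card + B.card + 1 = s.card := by
        rw [Finset.card_filter_add_card_filter_not, Finset.card_erase_add_one hv]
      have hpow : 2 ^ (n + 1 + (m + 1)) = 2 ^ (n + (m + 1)) + 2 ^ (n + 1 + m) := by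
        rw [show n + 1 + m = n + (m + 1) by omega, show n + 1 + (m + 1) = n + (m + 1) + 1 by omega,
          pow_succ, mul_two]
      have hA : A ⊆ s := (Finset.filter_subset _ _).trans (Finset.erase_subset v s)
      have hB : B ⊆ s := (Finset.filter_subset _ _).trans (Finset.erase_subset v s)
      by_cases hAcard : 2 ^ (n + (m + 1)) ≤ A.card
      · obtain ⟨t, htA, ht | ht⟩ := ihn (m + 1) A hAcard
        · refine ⟨insert v t, Finset.insert_subset hv (htA.trans hA), .inl (ht.insert ?_)⟩
          exact fun b hb => (Finset.mem_filter.1 (htA hb)).2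
        · exact ⟨t, htA.trans hA, .inr ht⟩
      · obtain ⟨t, htB, ht | ht⟩ := ihm B (by omega)
        · exact ⟨t, htB.trans hB, .inl ht⟩
        · refine ⟨insert v t, Finset.insert_subset hv (htB.trans hB), .inr (ht.insert ?_)⟩
          intro b hb
          obtain ⟨hb, hvb⟩ := Finset.mem_filter.1 (htB hb)
          exact (compl_adj G v b).2 ⟨(Finset.ne_of_mem_erase hb).symm, hvb⟩

lemma ramseyProp_of_ramsey_le {n m N : ℕ} (h : ramsey n m ≤ N) : RamseyProp N n m := by
  refine Nat.sInf_mem (s := {N | ∀ M, N ≤ M → RamseyProp M n m}) ⟨2 ^ (n + m), ?_⟩ N h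
  intro M hM G
  obtain ⟨t, -, ht⟩ := exists_isNClique_or_isNClique_compl G n m Finset.univ (by simpa using hM)
  exact ht.imp (⟨t, ·⟩) (⟨t, ·⟩)

lemma RamseyProp.exists_isClique_or_isStableSet {n m : ℕ} {X : Set V} (hX : X.Finite)
    (h : RamseyProp X.ncard n m) (G : SimpleGraph V) :
    ∃ Y ⊆ X, (Y.ncard = n ∧ G.IsClique Y) ∨ (Y.ncard = m ∧ IsStableSet G Y) := by
  have := hX.to_subtype
  let f : Fin X.ncard ↪ V :=
    (Finite.equivFinOfCardEq (Nat.card_coe_set_eq X)).symm.toEmbedding.trans (.subtype _)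
  have hmem : ∀ {t : Finset (Fin X.ncard)} {y}, y ∈ (↑(t.map f) : Set V) → ∃ i ∈ t, f i = y := by
    simp
  have hsub : ∀ t : Finset (Fin X.ncard), (↑(t.map f) : Set V) ⊆ X := fun t y hy => by
    obtain ⟨i, -, rfl⟩ := hmem hy
    exact Subtype.prop _
  rcases h (G.comap f) with ⟨t, ht⟩ | ⟨t, ht⟩
  · refine ⟨_, hsub t, .inl ⟨by simp [ht.card_eq], fun x hx y hy hxy => ?_⟩⟩
    obtain ⟨i, hi, rfl⟩ := hmem hx
    obtain ⟨j, hj, rfl⟩ := hmem hy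
    exact ht.isClique hi hj (ne_of_apply_ne f hxy)
  · refine ⟨_, hsub t, .inr ⟨by simp [ht.card_eq], fun x hx y hy hxy => ?_⟩⟩
    obtain ⟨i, hi, rfl⟩ := hmem hx
    obtain ⟨j, hj, rfl⟩ := hmem hy
    obtain rfl | hij := eq_or_ne i j
    · exact G.irrefl hxy
    · exact ((compl_adj _ i j).1 (ht.isClique hi hj hij)).2 hxy

end Ramsey

section Contraction

variable {W : Type*} {K F : SimpleGraph W} {S : Set W} {a₀ : W}

lemma contractSet_adj_of_notMem (ha₀ : a₀ ∈ S) {u v : {w // w ∉ S ∨ w = a₀}} (hu : u.1 ∉ S)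
    (hv : v.1 ∉ S) : (contractSet K S a₀).Adj u v ↔ K.Adj u v := by
  refine ⟨fun ⟨_, h⟩ => ?_,
    fun h => ⟨fun e => K.ne_of_adj h (congrArg Subtype.val e), .inl ⟨hu, hv, h⟩⟩⟩
  rcases h with ⟨-, -, h⟩ | ⟨h, -⟩ | ⟨h, -⟩
  exacts [h, ((h ▸ hu) ha₀).elim, ((h ▸ hv) ha₀).elim]

lemma contractSet_adj_of_eq (ha₀ : a₀ ∈ S) {u v : {w // w ∉ S ∨ w = a₀}} (hu : u.1 = a₀)
    (hv : v.1 ∉ S) : (contractSet K S a₀).Adj u v ↔ ∃ s ∈ S, K.Adj s v := by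
  refine ⟨fun ⟨_, h⟩ => ?_,
    fun h => ⟨fun e => hv (by rw [← e, hu]; exact ha₀), .inr (.inl ⟨hu, hv, h⟩)⟩⟩
  rcases h with ⟨h, -⟩ | ⟨-, -, h⟩ | ⟨h, -⟩
  exacts [((hu ▸ h) ha₀).elim, h, ((h ▸ hv) ha₀).elim]

def contractSetIso (ha₀ : a₀ ∈ S) (hcenter : ∀ v ∉ S, F.Adj a₀ v ↔ ∃ s ∈ S, K.Adj s v)
    (hoff : ∀ u ∉ S, ∀ v ∉ S, F.Adj u v ↔ K.Adj u v) :
    F.induce {w | w ∉ S ∨ w = a₀} ≃g contractSet K S a₀ where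
  toEquiv := Equiv.refl _
  map_rel_iff' {u v} := by
    change (contractSet K S a₀).Adj u v ↔ F.Adj u v
    rcases u with ⟨u, hu | rfl⟩ <;> rcases v with ⟨v, hv | rfl⟩
    · exact (contractSet_adj_of_notMem ha₀ hu hv).trans (hoff u hu v hv).symm
    · rw [(contractSet K S v).adj_comm, F.adj_comm]
      exact (contractSet_adj_of_eq ha₀ rfl hu).trans (hcenter u hu).symm
    · exact (contractSet_adj_of_eq ha₀ rfl hv).trans (hcenter v hv).symm
    · exact iff_of_false (SimpleGraph.irrefl _) F.irrefl

end Contraction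

section DeleteAndContract

variable {V : Type*}

lemma deleteEdges_adj_iff {G : SimpleGraph V} {Y : Set V} {x y : V} :
    (G.deleteEdges {e | ∃ u ∈ Y, ∃ v ∈ Y, e = s(u, v)}).Adj x y ↔
      G.Adj x y ∧ ¬ (x ∈ Y ∧ y ∈ Y) := by
  refine (deleteEdges_adj ..).trans (and_congr_right fun _ => not_congr ⟨?_, ?_⟩)
  · rintro ⟨u, hu, v, hv, he⟩
    rcases Sym2.eq_iff.1 he with ⟨rfl, rfl⟩ | ⟨rfl, rfl⟩
    exacts [⟨hu, hv⟩, ⟨hv, hu⟩]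
  · exact fun ⟨hx, hy⟩ => ⟨x, hx, y, hy, rfl⟩

lemma hasVertexMinor_contractSet [Finite V] {G F : SimpleGraph V} {S X Y : Set V}
    (hGF : HasVertexMinor G F) (hX : {v | v ∉ S ∧ ∃ u ∈ S, G.Adj v u} = X) (hYX : Y ⊆ X)
    (a₀ : {w // w ∉ X \ Y}) (ha₀ : a₀.1 ∈ S) (hhead : ∀ w ∉ S, F.Adj a₀ w ↔ w ∈ X)
    (hagree : ∀ u ∉ S, ∀ v ∉ S, (u ∉ X ∨ v ∉ X) → (F.Adj u v ↔ G.Adj u v))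
    (hY : IsStableSet F Y) :
    HasVertexMinor G
      (contractSet ((G.deleteEdges {e | ∃ u ∈ Y, ∃ v ∈ Y, e = s(u, v)}).induce {w | w ∉ X \ Y})
        {w | w.1 ∈ S} a₀) := by
  have hXiff : ∀ v, v ∈ X ↔ v ∉ S ∧ ∃ u ∈ S, G.Adj v u := fun v => by rw [← hX]; rfl
  have hXS : ∀ x ∈ X, x ∉ S := fun x hx => ((hXiff x).1 hx).1
  have hY' : ∀ w : {w // w ∉ X \ Y}, w.1 ∈ X → w.1 ∈ Y := fun w hw => by_contra fun h => w.2 ⟨hw, h⟩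
  refine ((hGF.trans (hasVertexMinor_induce F _)).trans (hasVertexMinor_induce _ _)).of_iso
    (contractSetIso ha₀ (fun v hv => ?_) (fun u hu v hv => ?_))
  · change F.Adj a₀ v ↔ _
    rw [hhead v hv]
    refine ⟨fun hvX => ?_, fun ⟨s, hs, hsv⟩ => ?_⟩
    · obtain ⟨-, u, hu, hvu⟩ := (hXiff v).1 hvX
      refine ⟨⟨u, fun h => hXS u h.1 hu⟩, hu, deleteEdges_adj_iff.2 ⟨hvu.symm, fun h => ?_⟩⟩
      exact hXS u (hYX h.1) hu
    · exact (hXiff v).2 ⟨hv, s, hs, (deleteEdges_adj_iff.1 hsv).1.symm⟩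
  · change F.Adj u v ↔ (G.deleteEdges _).Adj u v
    rw [deleteEdges_adj_iff]
    by_cases huv : u.1 ∈ X ∧ v.1 ∈ X
    · exact iff_of_false (hY _ (hY' u huv.1) _ (hY' v huv.2))
        fun h => h.2 ⟨hY' u huv.1, hY' v huv.2⟩
    · rw [hagree u hu v hv (not_and_or.1 huv)]
      exact ⟨fun h => ⟨h, fun h' => huv ⟨hYX h'.1, hYX h'.2⟩⟩, And.left⟩

end DeleteAndContract

theorem contract_dangling_path_general (V : Type) [Fintype V] (q : ℕ)
    (G : SimpleGraph V) {a b : V} (p : G.Walk a b) (hp : IsInducedPath G p)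
    (X : Set V) (hd : DanglesOddly G p X) (hX : ramsey q q ≤ X.ncard) :
    ∃ Y : Set V, Y ⊆ X ∧ q ≤ Y.ncard ∧
      ∃ a₀ : {w : V // w ∉ X \ Y}, a₀.1 ∈ p.support ∧
        HasVertexMinor G
          (contractSet
            ((G.deleteEdges {e | ∃ u ∈ Y, ∃ v ∈ Y, e = s(u, v)}).induce
              {w | w ∉ X \ Y})
            {w | w.1 ∈ p.support} a₀) := by
  have hP := p.cons_tail_support ▸ hp.isInducedPathList
  have hD := p.cons_tail_support ▸ hd.danglesOddlyList
  obtain ⟨F, hGF, hhead, hagree⟩ := exists_locallyEquivalent_adj_head_iff a _ G X hP hD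
  rw [p.cons_tail_support] at hhead hagree
  have hXS : ∀ x ∈ X, x ∉ p.support := fun x hx => (hd.danglesOddlyList.2 x hx).1
  obtain ⟨Y, hYX, hY⟩ := (ramseyProp_of_ramsey_le hX).exists_isClique_or_isStableSet X.toFinite F
  obtain ⟨F', hGF', hhead', hagree', hF'Y⟩ :=
    exists_locallyEquivalent_isStableSet hGF hXS hhead hagree hYX (hY.imp And.right And.right)
  refine ⟨Y, hYX, hY.elim (·.1.ge) (·.1.ge), ⟨a, fun h => hXS a h.1 p.start_mem_support⟩,
    p.start_mem_support, ?_⟩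
  exact hasVertexMinor_contractSet hGF'.hasVertexMinor hd.1 hYX _ p.start_mem_support hhead'
    hagree' hF'Y

/-- **Lemma 6.2.** If an induced path `P` dangles oddly from `X` with `|X| ≥ R(q,q)`,
then there is `Y ⊆ X` with `|Y| ≥ q` such that `(G − (X−Y) − E(Y))/E(P)` is a
vertex-minor of `G`. -/
theorem contract_dangling_path (V : Type) [Fintype V] (q : ℕ) (hq : 0 < q)
    (G : SimpleGraph V) {a b : V} (p : G.Walk a b) (hp : IsInducedPath G p)
    (X : Set V) (hd : DanglesOddly G p X) (hX : ramsey q q ≤ X.ncard) :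
    ∃ Y : Set V, Y ⊆ X ∧ q ≤ Y.ncard ∧
      ∃ a₀ : {w : V // w ∉ X \ Y}, a₀.1 ∈ p.support ∧
        HasVertexMinor G
          (contractSet
            ((G.deleteEdges {e | ∃ u ∈ Y, ∃ v ∈ Y, e = s(u, v)}).induce
              {w | w ∉ X \ Y})
            {w | w.1 ∈ p.support} a₀) :=
  contract_dangling_path_general V q G p hp X hd hX
end

section
/- Let q, c, κ be non-negative integers with κ ≥ 1. Then every graph G with χ(G) > 2^q · max{c, κ} and χ^{(3)}(G) ≤ κ contains a long q-cover (ℒ_i : i ∈ [q]) of a set C ⊆ V(G) with χ(G[C]) > c. -/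
open SimpleGraph

/-!
Induction on `q`. If `χ(G) > 2m`, then `χ > 2m` already on some connected component, and colouring
each of its vertices by the parity of its distance from a fixed vertex `v` together with a colouring
of its distance level shows that some level `{u | dist v u = k}` has `χ > m`. For
`m = 2^(q-1)·max{c,κ} ≥ κ` the bound on `3`-balls forces `k = t + 4`. Recursing inside that level
gives `C` and a long `(q-1)`-cover; the ball of radius `t` and the spheres of radii `t + 1, t + 2,
t + 3` form one more long cover of `C`, disjoint from the level and with its first three parts
anti-complete to it, so it can be appended as the last one.
-/

section Chromatic

variable {V W : Type*} {G : SimpleGraph V} {H : SimpleGraph W}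

lemma chi_le_of_colorable {n : ℕ} (h : G.Colorable n) : chi G ≤ n :=
  ENat.toNat_le_of_le_natCast h.chromaticNumber_le

lemma colorable_of_chi_le [Finite V] {n : ℕ} (h : chi G ≤ n) : G.Colorable n :=
  (colorable_chromaticNumber_of_fintype G).mono h

lemma chi_le_of_hom [Finite W] (f : G →g H) : chi G ≤ chi H :=
  chi_le_of_colorable ((colorable_chromaticNumber_of_fintype H).of_hom f)

lemma chi_induce_mono [Finite V] {s t : Set V} (h : s ⊆ t) :
    chi (G.induce s) ≤ chi (G.induce t) :=
  chi_le_of_hom (G.induceHomOfLE h).toHom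

lemma colorable_of_levels {m : ℕ} (ℓ : W → ℕ) (hℓ : ∀ a b, H.Adj a b → ℓ b ≤ ℓ a + 1)
    (h : ∀ k, (H.induce {u | ℓ u = k}).Colorable m) : H.Colorable (2 * m) := by
  let col k := (h k).some
  have hcol : ∀ {a b} k l (ha : ℓ a = k) (hb : ℓ b = l), H.Adj a b → k = l →
      col k ⟨a, ha⟩ ≠ col l ⟨b, hb⟩ := by
    rintro a b k l ha hb hab rfl
    exact (col k).valid hab
  let C : H.Coloring (Fin 2 × Fin m) :=
    Coloring.mk (fun u => (⟨ℓ u % 2, Nat.mod_lt _ two_pos⟩, col (ℓ u) ⟨u, rfl⟩))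
      fun {a b} hab heq => by
        obtain ⟨hpar, hlevel⟩ := Prod.ext_iff.1 heq
        have hpar : ℓ a % 2 = ℓ b % 2 := Fin.mk.inj_iff.1 hpar
        have := hℓ a b hab
        have := hℓ b a hab.symm
        exact hcol _ _ rfl rfl hab (by omega) hlevel
  simpa using C.colorable

end Chromatic

section Shells

variable {V : Type*} (G : SimpleGraph V) (v : V)

/-- Reachability is required explicitly: `G.dist v u = 0` when `u` is not reachable from `v`. -/
def shell (a b : ℕ) : Set V :=
  {u | G.Reachable v u ∧ a ≤ G.dist v u ∧ G.dist v u ≤ b}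

variable {G}

lemma dist_le_dist_add_one_of_adj {a b : V} (h : G.Adj a b) : G.dist v b ≤ G.dist v a + 1 := by
  rcases h.diff_dist_adj (u := v) with h | h | h <;> omega

lemma exists_adj_of_dist_eq_succ {u : V} {n : ℕ} (h : G.dist v u = n + 1) :
    ∃ w, G.Reachable v w ∧ G.dist v w = n ∧ G.Adj w u := by
  obtain ⟨p, hp⟩ :=
    (Reachable.of_dist_ne_zero (by omega : G.dist v u ≠ 0)).exists_walk_length_eq_dist
  have hadj : G.Adj (p.getVert n) u := by
    simpa [show n + 1 = p.length by omega] using p.adj_getVert_succ (by omega : n < p.length)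
  refine ⟨p.getVert n, ⟨p.take n⟩, le_antisymm ?_ ?_, hadj⟩
  · exact (dist_le (p.take n)).trans (by simp [Walk.take_length])
  · have := dist_le_dist_add_one_of_adj v hadj
    omega

variable (G)

lemma antiComplete_shell {a₁ b₁ a₂ b₂ : ℕ} (h : b₁ + 1 < a₂ ∨ b₂ + 1 < a₁) :
    AntiComplete G (shell G v a₁ b₁) (shell G v a₂ b₂) := by
  rintro x ⟨-, hx₁, hx₂⟩ y ⟨-, hy₁, hy₂⟩ hxy
  have := dist_le_dist_add_one_of_adj v hxy
  have := dist_le_dist_add_one_of_adj v hxy.symm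
  omega

lemma disjoint_shell {a₁ b₁ a₂ b₂ : ℕ} (h : b₁ < a₂ ∨ b₂ < a₁) :
    Disjoint (shell G v a₁ b₁) (shell G v a₂ b₂) :=
  Set.disjoint_left.2 fun _ ⟨_, _, _⟩ ⟨_, _, _⟩ => by omega

lemma covers_shell {a b : ℕ} (hab : a ≤ b) :
    Covers G (shell G v a b) (shell G v (b + 1) (b + 1)) := by
  rintro u ⟨-, h₁, h₂⟩
  obtain ⟨w, hw, hd, hadj⟩ := exists_adj_of_dist_eq_succ (G := G) v (u := u) (n := b) (by omega)
  exact ⟨w, ⟨hw, by omega, by omega⟩, hadj⟩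

/-- Shortest walks from `v` stay inside the ball. -/
lemma connected_induce_shell_zero (t : ℕ) : (G.induce (shell G v 0 t)).Connected := by
  classical
  refine induce_connected_of_patches v ⟨Reachable.refl v, Nat.zero_le _, by simp⟩ fun {u} hu => ?_
  obtain ⟨p, hp⟩ := hu.1.exists_walk_length_eq_dist
  refine ⟨{x | x ∈ p.support}, fun x hx => ?_, p.start_mem_support, p.end_mem_support,
    p.connected_induce_support.preconnected _ _⟩
  exact ⟨⟨p.takeUntil x hx⟩, Nat.zero_le _,
    (dist_le _).trans ((p.length_takeUntil_le_length hx).trans (hp ▸ hu.2.2))⟩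

lemma shell_subset_ballSet {a b ρ : ℕ} (h : b ≤ ρ) : shell G v a b ⊆ ballSet G v ρ :=
  fun _ hu =>
    let ⟨p, hp⟩ := hu.1.exists_walk_length_eq_dist
    ⟨p, hp ▸ hu.2.2.trans h⟩

def shellCover (t : ℕ) : Fin 4 → Set V :=
  ![shell G v 0 t, shell G v (t + 1) (t + 1), shell G v (t + 2) (t + 2), shell G v (t + 3) (t + 3)]

lemma isLongCover_shellCover {t : ℕ} {C : Set V} (hC : C ⊆ shell G v (t + 4) (t + 4)) :
    IsLongCover G (shellCover G v t) C := by
  have hCanti : ∀ a b, b + 1 < t + 4 → AntiComplete G C (shell G v a b) :=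
    fun a b h x hx => antiComplete_shell G v (Or.inr h) x (hC hx)
  refine ⟨?_, fun i => ?_, connected_induce_shell_zero G v t, covers_shell G v (Nat.zero_le t),
    covers_shell G v le_rfl, covers_shell G v le_rfl, fun x hx => covers_shell G v le_rfl x (hC hx),
    hCanti _ _ (by omega), hCanti _ _ (by omega), hCanti _ _ (by omega),
    antiComplete_shell G v (by omega), antiComplete_shell G v (by omega),
    antiComplete_shell G v (by omega)⟩
  · intro i j hij
    fin_cases i <;> fin_cases j <;> first
      | exact absurd rfl hij
      | exact disjoint_shell G v (by omega)
  · fin_cases i <;> exact (disjoint_shell G v (by omega)).mono_right hC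

end Shells

lemma exists_lt_chi_induce_shell {V : Type*} [Finite V] {G : SimpleGraph V} {m : ℕ}
    (h : 2 * m < chi G) : ∃ v k, m < chi (G.induce (shell G v k k)) := by
  by_contra! hle
  refine (chi_le_of_colorable (colorable_iff_forall_connectedComponent.2 fun c => ?_)).not_gt h
  obtain ⟨v, rfl⟩ := c.exists_rep
  refine colorable_of_levels (fun u => G.dist v u)
    (fun _ _ hab => dist_le_dist_add_one_of_adj v hab) fun k => (colorable_of_chi_le (hle v k)).of_hom ?_
  exact ⟨fun u => ⟨u.1.1, (ConnectedComponent.exact u.1.2).symm, u.2.ge, u.2.le⟩, id⟩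

section Restrict

variable {V : Type*} {G : SimpleGraph V} {s : Set V}

def induceInduceHom (t : Set s) : (G.induce s).induce t →g G.induce (Subtype.val '' t) where
  toFun u := ⟨u.1.1, Set.mem_image_of_mem _ u.2⟩
  map_rel' h := h

lemma induceInduceHom_surjective (t : Set s) :
    Function.Surjective (induceInduceHom (G := G) t) := by
  rintro ⟨_, a, ha, rfl⟩
  exact ⟨⟨a, ha⟩, rfl⟩

lemma chi_induce_induce_le [Finite V] (t : Set s) :
    chi ((G.induce s).induce t) ≤ chi (G.induce (Subtype.val '' t)) :=
  chi_le_of_hom (induceInduceHom t)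

lemma image_val_ballSet_subset (w : s) (ρ : ℕ) :
    Subtype.val '' ballSet (G.induce s) w ρ ⊆ ballSet G w ρ := by
  rintro _ ⟨u, ⟨p, hp⟩, rfl⟩
  exact ⟨p.map (Embedding.induce s).toHom, (Walk.length_map _ _).trans_le hp⟩

lemma chi_induce_ballSet_le_chiBall [Finite V] (w : V) (ρ : ℕ) :
    chi (G.induce (ballSet G w ρ)) ≤ chiBall G ρ :=
  le_ciSup (f := fun w => chi (G.induce (ballSet G w ρ))) (Set.finite_range _).bddAbove w

lemma chiBall_induce_le [Finite V] (ρ : ℕ) : chiBall (G.induce s) ρ ≤ chiBall G ρ := by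
  refine ciSup_le' fun w => ?_
  calc chi ((G.induce s).induce (ballSet (G.induce s) w ρ))
      ≤ chi (G.induce (Subtype.val '' ballSet (G.induce s) w ρ)) := chi_induce_induce_le _
    _ ≤ chi (G.induce (ballSet G w ρ)) := chi_induce_mono (image_val_ballSet_subset w ρ)
    _ ≤ chiBall G ρ := chi_induce_ballSet_le_chiBall w.1 ρ

lemma Covers.image_val {A B : Set s} (h : Covers (G.induce s) A B) :
    Covers G (Subtype.val '' A) (Subtype.val '' B) := by
  rintro _ ⟨b, hb, rfl⟩
  obtain ⟨a, ha, hab⟩ := h b hb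
  exact ⟨a, Set.mem_image_of_mem _ ha, hab⟩

lemma AntiComplete.image_val {A B : Set s} (h : AntiComplete (G.induce s) A B) :
    AntiComplete G (Subtype.val '' A) (Subtype.val '' B) := by
  rintro _ ⟨a, ha, rfl⟩ _ ⟨b, hb, rfl⟩
  exact h a ha b hb

lemma disjoint_image_val {A B : Set s} (h : Disjoint A B) :
    Disjoint (Subtype.val '' A) (Subtype.val '' B) :=
  Set.disjoint_image_of_injective Subtype.val_injective h

lemma IsLongCover.image_val {L : Fin 4 → Set s} {C : Set s} (h : IsLongCover (G.induce s) L C) :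
    IsLongCover G (fun j => Subtype.val '' L j) (Subtype.val '' C) := by
  obtain ⟨h₁, h₂, h₃, h₄, h₅, h₆, h₇, h₈, h₉, h₁₀, h₁₁, h₁₂, h₁₃⟩ := h
  exact ⟨fun i j hij => disjoint_image_val (h₁ i j hij), fun i => disjoint_image_val (h₂ i),
    h₃.map (induceInduceHom _) (induceInduceHom_surjective _), h₄.image_val, h₅.image_val,
    h₆.image_val, h₇.image_val, h₈.image_val, h₉.image_val, h₁₀.image_val, h₁₁.image_val,
    h₁₂.image_val, h₁₃.image_val⟩

lemma IsLongQCover.image_val {q : ℕ} {ℒ : Fin q → Fin 4 → Set s} {C : Set s}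
    (h : IsLongQCover (G.induce s) ℒ C) :
    IsLongQCover G (fun i j => Subtype.val '' ℒ i j) (Subtype.val '' C) := by
  obtain ⟨h₁, h₂, h₃⟩ := h
  refine ⟨fun i => (h₁ i).image_val, fun i j hij => ?_, fun i j hij => ?_⟩
  · simpa only [Set.image_union] using disjoint_image_val (h₂ i j hij)
  · simpa only [Set.image_union] using (h₃ i j hij).image_val

end Restrict

lemma IsLongQCover.snoc {V : Type*} {G : SimpleGraph V} {q : ℕ} {ℒ : Fin q → Fin 4 → Set V}
    {L : Fin 4 → Set V} {C K : Set V} (hℒ : IsLongQCover G ℒ C) (hL : IsLongCover G L C)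
    (hℒK : ∀ i j, ℒ i j ⊆ K) (hL_disj : ∀ j, Disjoint (L j) K)
    (hL_anti : AntiComplete G (L 0 ∪ L 1 ∪ L 2) K) :
    IsLongQCover G (Fin.snoc (α := fun _ => Fin 4 → Set V) ℒ L) C := by
  have hℒK_union : ∀ i, ℒ i 0 ∪ ℒ i 1 ∪ ℒ i 2 ∪ ℒ i 3 ⊆ K := fun i => by
    simp only [Set.union_subset_iff]
    exact ⟨⟨⟨hℒK i 0, hℒK i 1⟩, hℒK i 2⟩, hℒK i 3⟩
  have hL_disj_union : Disjoint (L 0 ∪ L 1 ∪ L 2 ∪ L 3) K := by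
    simp only [Set.disjoint_union_left]
    exact ⟨⟨⟨hL_disj 0, hL_disj 1⟩, hL_disj 2⟩, hL_disj 3⟩
  refine ⟨fun i => ?_, fun i j hij => ?_, fun i j hij => ?_⟩
  · induction i using Fin.lastCases <;> simp [hL, hℒ.1]
  · induction i using Fin.lastCases <;> induction j using Fin.lastCases <;>
      simp only [Fin.snoc_castSucc, Fin.snoc_last, ne_eq, Fin.castSucc_inj] at hij ⊢
    · exact (hij trivial).elim
    · exact hL_disj_union.mono_right (hℒK_union _)
    · exact (hL_disj_union.mono_right (hℒK_union _)).symm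
    · exact hℒ.2.1 _ _ hij
  · induction i using Fin.lastCases <;> induction j using Fin.lastCases <;>
      simp only [Fin.snoc_castSucc, Fin.snoc_last, Fin.castSucc_lt_castSucc_iff] at hij ⊢
    · exact absurd hij (lt_irrefl _)
    · exact absurd hij (Fin.castSucc_lt_last _).asymm
    · exact fun a ha b hb => hL_anti a ha b (hℒK_union _ hb)
    · exact hℒ.2.2 _ _ hij

lemma IsLongQCover.snoc_shellCover {V : Type*} {G : SimpleGraph V} {v : V} {t q : ℕ}
    {ℒ : Fin q → Fin 4 → Set (shell G v (t + 4) (t + 4))} {C : Set (shell G v (t + 4) (t + 4))}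
    (h : IsLongQCover (G.induce (shell G v (t + 4) (t + 4))) ℒ C) :
    IsLongQCover G (Fin.snoc (α := fun _ => Fin 4 → Set V)
      (fun i j => Subtype.val '' ℒ i j) (shellCover G v t)) (Subtype.val '' C) :=
  h.image_val.snoc (isLongCover_shellCover G v (Subtype.coe_image_subset _ _))
    (fun _ _ => Subtype.coe_image_subset _ _)
    (fun j => by fin_cases j <;> exact disjoint_shell G v (by omega))
    (fun a ha => by rcases ha with (ha | ha) | ha <;> exact antiComplete_shell G v (by omega) a ha)

theorem long_q_cover_exists_general (V : Type) [Fintype V] (q c κ : ℕ)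
    (G : SimpleGraph V) (hchi : 2 ^ q * max c κ < chi G) (hball : chiBall G 3 ≤ κ) :
    ∃ (C : Set V) (ℒ : Fin q → Fin 4 → Set V),
      IsLongQCover G ℒ C ∧ c < chi (G.induce C) := by
  induction q generalizing V with
  | zero =>
    refine ⟨Set.univ, Fin.elim0, ⟨fun i => i.elim0, fun i => i.elim0, fun i => i.elim0⟩, ?_⟩
    calc c ≤ max c κ := le_max_left c κ
      _ < chi G := by simpa using hchi
      _ ≤ chi (G.induce Set.univ) := chi_le_of_hom G.induceUnivIso.symm.toHom
  | succ q ih =>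
    obtain ⟨v, k, hk⟩ := exists_lt_chi_induce_shell (G := G) (m := 2 ^ q * max c κ)
      (by rw [pow_succ] at hchi; linarith)
    have hk4 : 4 ≤ k := by
      by_contra! hk3
      have hball_k : chi (G.induce (shell G v k k)) ≤ κ :=
        (chi_induce_mono (shell_subset_ballSet G v (by omega : k ≤ 3))).trans <|
          (chi_induce_ballSet_le_chiBall v 3).trans hball
      have : κ ≤ 2 ^ q * max c κ :=
        (le_max_right c κ).trans (Nat.le_mul_of_pos_left _ (by positivity))
      omega
    obtain ⟨t, rfl⟩ := Nat.exists_eq_add_of_le' hk4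
    have := Fintype.ofFinite (shell G v (t + 4) (t + 4))
    obtain ⟨C, ℒ, hℒ, hC⟩ :=
      ih _ (G.induce (shell G v (t + 4) (t + 4))) hk ((chiBall_induce_le 3).trans hball)
    exact ⟨_, _, hℒ.snoc_shellCover, hC.trans_le (chi_induce_induce_le C)⟩

/-- **Lemma 7.1.** Every graph with `χ(G) > 2^q·max{c,κ}` and `χ^{(3)}(G) ≤ κ`
contains a long `q`-cover of a set `C` with `χ(C) > c`. -/
theorem long_q_cover_exists (V : Type) [Fintype V] (q c κ : ℕ) (hκ : 1 ≤ κ)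
    (G : SimpleGraph V) (hchi : 2 ^ q * max c κ < chi G) (hball : chiBall G 3 ≤ κ) :
    ∃ (C : Set V) (ℒ : Fin q → Fin 4 → Set V),
      IsLongQCover G ℒ C ∧ c < chi (G.induce C) :=
  long_q_cover_exists_general V q c κ G hchi hball
end
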